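/- Two finite connected Alexander quandles are isomorphic as quandles if and only if they are isomorphic as Λ-modules. More precisely, if M and N are finite connected Alexander quandles and f : M → N is a quandle isomorphism with f(0) = 0, then f is an isomorphism of Λ-modules. -/

import Mathlib

open LaurentPolynomial

/-!
Evaluating the quandle law at `b = 0` and at `a = 0` shows that a quandle map with `f 0 = 0`
commutes with `t` and with `1 - t`. When `t` is a unit and `1 - t` is surjective, every sum
`u + v` can be written as `t • a + (1 - t) • b`, so the quandle law makes `f` additive. An
additive map commuting with `t` commutes with `t⁻¹`, hence with the whole ring `ℤ[t, t⁻¹]`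
that `t` and `t⁻¹` generate.
-/

namespace AddMonoidHom

variable {R M N : Type*} [Ring R] [AddCommGroup M] [Module R M] [AddCommGroup N] [Module R N]

def smulCommSubring (f : M →+ N) : Subring R where
  carrier := {r | ∀ x, f (r • x) = r • f x}
  zero_mem' x := by simp
  one_mem' x := by simp
  add_mem' hr hs x := by simp only [add_smul, map_add, hr x, hs x]
  mul_mem' hr hs x := by rw [mul_smul, mul_smul, hr, hs]
  neg_mem' hr x := by simp only [neg_smul, map_neg, hr x]

theorem mem_smulCommSubring {f : M →+ N} {r : R} :
    r ∈ f.smulCommSubring ↔ ∀ x, f (r • x) = r • f x :=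
  Iff.rfl

theorem invOf_mem_smulCommSubring {f : M →+ N} {r : R} [Invertible r]
    (hr : r ∈ f.smulCommSubring) : ⅟r ∈ f.smulCommSubring := fun x =>
  calc f (⅟r • x) = ⅟r • r • f (⅟r • x) := by rw [smul_smul, invOf_mul_self, one_smul]
    _ = ⅟r • f x := by rw [← hr, smul_smul, mul_invOf_self, one_smul]

end AddMonoidHom

theorem LaurentPolynomial.eq_top_of_T_one_mem_of_T_neg_one_mem {S : Subring ℤ[T;T⁻¹]}
    (h₁ : T 1 ∈ S) (hneg : T (-1) ∈ S) : S = ⊤ := by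
  refine (Subring.eq_top_iff' S).mpr fun p => ?_
  induction p using LaurentPolynomial.induction_on with
  | h_C a => simpa only [eq_intCast] using intCast_mem S a
  | h_add hp hq => exact S.add_mem hp hq
  | h_C_mul_T n a h =>
    rw [T_add, ← mul_assoc]
    exact S.mul_mem h h₁
  | h_C_mul_T_Z n a h =>
    rw [sub_eq_add_neg, T_add, ← mul_assoc]
    exact S.mul_mem h hneg

def IsAlexanderHom {R M N : Type*} [Ring R] [AddCommGroup M] [Module R M] [AddCommGroup N]
    [Module R N] (t : R) (f : M → N) : Prop :=
  ∀ a b, f (t • a + (1 - t) • b) = t • f a + (1 - t) • f b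

namespace IsAlexanderHom

section Ring

variable {R M N : Type*} [Ring R] [AddCommGroup M] [Module R M] [AddCommGroup N] [Module R N]
  {t : R} {f : M → N}

theorem sub_const (hf : IsAlexanderHom t f) (c : N) : IsAlexanderHom t (fun x => f x - c) := by
  intro a b
  show f _ - c = _
  rw [hf]
  simp only [smul_sub, sub_smul, one_smul]
  abel

theorem map_smul_self (hf : IsAlexanderHom t f) (h0 : f 0 = 0) (a : M) :
    f (t • a) = t • f a := by
  simpa [h0] using hf a 0

theorem map_one_sub_smul (hf : IsAlexanderHom t f) (h0 : f 0 = 0) (b : M) :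
    f ((1 - t) • b) = (1 - t) • f b := by
  simpa [h0] using hf 0 b

theorem map_add (hf : IsAlexanderHom t f) (h0 : f 0 = 0) (ht : IsUnit t)
    (hconn : Function.Surjective ((1 - t) • · : M → M)) (u v : M) :
    f (u + v) = f u + f v := by
  obtain ⟨t, rfl⟩ := ht
  obtain ⟨a, rfl⟩ : ∃ a, (t : R) • a = u := ⟨t⁻¹ • u, smul_inv_smul t u⟩
  obtain ⟨b, rfl⟩ := hconn v
  rw [hf, hf.map_smul_self h0, hf.map_one_sub_smul h0]

def toAddMonoidHom (hf : IsAlexanderHom t f) (h0 : f 0 = 0) (ht : IsUnit t)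
    (hconn : Function.Surjective ((1 - t) • · : M → M)) : M →+ N :=
  AddMonoidHom.mk' f (hf.map_add h0 ht hconn)

end Ring

variable {M N : Type*} [AddCommGroup M] [Module ℤ[T;T⁻¹] M] [AddCommGroup N] [Module ℤ[T;T⁻¹] N]
  {f : M → N}

theorem exists_linearEquiv (hf : IsAlexanderHom (T 1 : ℤ[T;T⁻¹]) f) (h0 : f 0 = 0)
    (hconn : Function.Surjective ((1 - T 1 : ℤ[T;T⁻¹]) • · : M → M))
    (hbij : Function.Bijective f) :
    ∃ g : M ≃ₗ[ℤ[T;T⁻¹]] N, ∀ x, g x = f x := by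
  let F := hf.toAddMonoidHom h0 (isUnit_T 1) hconn
  have hT : T 1 ∈ F.smulCommSubring := hf.map_smul_self h0
  have hTinv : T (-1) ∈ F.smulCommSubring := invOf_T (R := ℤ) 1 ▸ F.invOf_mem_smulCommSubring hT
  have hS : F.smulCommSubring = ⊤ := eq_top_of_T_one_mem_of_T_neg_one_mem hT hTinv
  let g : M →ₗ[ℤ[T;T⁻¹]] N :=
    { F with map_smul' := fun p => F.mem_smulCommSubring.mp (hS ▸ Subring.mem_top p) }
  exact ⟨LinearEquiv.ofBijective g hbij, fun _ => rfl⟩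

end IsAlexanderHom

theorem connected_alexander_quandles_iso_iff_module_iso_general
    (M N : Type) [AddCommGroup M] [Module (LaurentPolynomial ℤ) M]
    [AddCommGroup N] [Module (LaurentPolynomial ℤ) N]
    (hMconn : ∀ y : M, ∃ x : M, ((1 : LaurentPolynomial ℤ) - T 1) • x = y) :
    ((∃ f : M → N, Function.Bijective f ∧
        ∀ a b : M,
          f ((T 1 : LaurentPolynomial ℤ) • a + ((1 : LaurentPolynomial ℤ) - T 1) • b)
            = (T 1 : LaurentPolynomial ℤ) • f a + ((1 : LaurentPolynomial ℤ) - T 1) • f b) ↔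
      Nonempty (M ≃ₗ[LaurentPolynomial ℤ] N)) ∧
    (∀ f : M → N, Function.Bijective f →
      (∀ a b : M,
        f ((T 1 : LaurentPolynomial ℤ) • a + ((1 : LaurentPolynomial ℤ) - T 1) • b)
          = (T 1 : LaurentPolynomial ℤ) • f a + ((1 : LaurentPolynomial ℤ) - T 1) • f b) →
      f 0 = 0 →
      ∃ g : M ≃ₗ[LaurentPolynomial ℤ] N, ∀ x : M, g x = f x) := by
  refine ⟨⟨?_, ?_⟩, fun f hbij hf h0 => IsAlexanderHom.exists_linearEquiv hf h0 hMconn hbij⟩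
  · rintro ⟨f, hbij, hf⟩
    obtain ⟨g, -⟩ := IsAlexanderHom.exists_linearEquiv (IsAlexanderHom.sub_const hf (f 0))
      (sub_self _) hMconn ((Equiv.subRight (f 0)).bijective.comp hbij)
    exact ⟨g⟩
  · rintro ⟨e⟩
    exact ⟨e, e.bijective, fun a b => by simp⟩

/-- Two finite connected Alexander quandles are isomorphic as quandles iff they
are isomorphic as `Λ = ℤ[t,t⁻¹]`-modules.  More precisely, if `M` and `N` are
finite connected Alexander quandles (`(1-t)M = M`, `(1-t)N = N`) and
`f : M → N` is a quandle isomorphism with `f 0 = 0`, then `f` is an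
isomorphism of `Λ`-modules. -/
theorem connected_alexander_quandles_iso_iff_module_iso
    (M N : Type) [AddCommGroup M] [Module (LaurentPolynomial ℤ) M]
    [AddCommGroup N] [Module (LaurentPolynomial ℤ) N]
    [Finite M] [Finite N]
    (hMconn : ∀ y : M, ∃ x : M, ((1 : LaurentPolynomial ℤ) - T 1) • x = y)
    (hNconn : ∀ y : N, ∃ x : N, ((1 : LaurentPolynomial ℤ) - T 1) • x = y) :
    ((∃ f : M → N, Function.Bijective f ∧
        ∀ a b : M,
          f ((T 1 : LaurentPolynomial ℤ) • a + ((1 : LaurentPolynomial ℤ) - T 1) • b)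
            = (T 1 : LaurentPolynomial ℤ) • f a + ((1 : LaurentPolynomial ℤ) - T 1) • f b) ↔
      Nonempty (M ≃ₗ[LaurentPolynomial ℤ] N)) ∧
    (∀ f : M → N, Function.Bijective f →
      (∀ a b : M,
        f ((T 1 : LaurentPolynomial ℤ) • a + ((1 : LaurentPolynomial ℤ) - T 1) • b)
          = (T 1 : LaurentPolynomial ℤ) • f a + ((1 : LaurentPolynomial ℤ) - T 1) • f b) →
      f 0 = 0 →
      ∃ g : M ≃ₗ[LaurentPolynomial ℤ] N, ∀ x : M, g x = f x) :=
  connected_alexander_quandles_iso_iff_module_iso_general M N hMconn
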